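/- arXiv:0808.0487 — 2 statements merged into one kernel-verified Lean document; each statement's English description precedes it below -/
import Mathlib

section
/- Let K ⊆ ℕ^s be a representative set, i.e., a set containing exactly one element of D(h⃗) for every h⃗ ∈ ℤ_p^m. Then for all n, v ∈ {0,…,p^m−1}, p^{−m} Σ_{k ∈ K} wal_k(x_n) · conj(wal_k(x_v)) = 1 if n = v and = 0 otherwise, where x_0,…,x_{p^m−1} are the points of the digital net P(C). -/
open scoped BigOperators

/-- `ω_p = exp(2πi/p)`. -/
noncomputable def omega (p : ℕ) : ℂ := Complex.exp (2 * Real.pi * Complex.I / p)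

/-- The `i`-th base-`p` digit of the natural number `n` (starting from `i = 0`). -/
def ndigit (p n i : ℕ) : ℕ := (n / p ^ i) % p

/-- The `i`-th base-`p` digit of the real number `x` (starting from `i = 1`):
`x_i = ⌊p^i x⌋ mod p`. -/
noncomputable def xdigit (p : ℕ) (x : ℝ) (i : ℕ) : ℕ := (⌊(p : ℝ) ^ i * x⌋).toNat % p

/-- The base-`p` Walsh function `wal_k(x) = ω_p^{x_1 k_0 + x_2 k_1 + ⋯}`
(the digits of `k` vanish beyond index `k`, so the sum below is the full series). -/
noncomputable def wal (p k : ℕ) (x : ℝ) : ℂ :=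
  omega p ^ (∑ i ∈ Finset.range (k + 1), xdigit p x (i + 1) * ndigit p k i)

/-- Multivariate Walsh function `wal_k(x) = ∏_j wal_{k_j}(x_j)`. -/
noncomputable def walS (p s : ℕ) (k : Fin s → ℕ) (x : Fin s → ℝ) : ℂ :=
  ∏ j, wal p (k j) (x j)

/-- The vector of the first `m` base-`p` digits of `n`, viewed in `ℤ_p^m`. -/
def nvec (p m : ℕ) (n : ℕ) : Fin m → ZMod p := fun i => (ndigit p n i : ZMod p)

/-- The `n`-th point of the digital net generated by matrices `C = (C_1,…,C_s)`:
`x_{j,n} = Σ_{i=1}^m y_{j,n,i} p^{-i}` where `y⃗_{j,n} = C_j n⃗`. -/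
noncomputable def netPoint (p s m : ℕ) (C : Fin s → Matrix (Fin m) (Fin m) (ZMod p)) (n : ℕ) :
    Fin s → ℝ :=
  fun j => ∑ i : Fin m, ((Matrix.mulVec (C j) (nvec p m n)) i).val / (p : ℝ) ^ (i.val + 1)

/-- `C·k = C_1ᵀ k⃗_1^{(m)} + ⋯ + C_sᵀ k⃗_s^{(m)} ∈ ℤ_p^m`. -/
def Cdot (p s m : ℕ) (C : Fin s → Matrix (Fin m) (Fin m) (ZMod p)) (k : Fin s → ℕ) :
    Fin m → ZMod p :=
  ∑ j, Matrix.mulVec (Matrix.transpose (C j)) (nvec p m (k j))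

/-- Digitwise addition modulo `p` of base-`p` digits: `k ⊕ l`. -/
def dadd (p k l : ℕ) : ℕ :=
  ∑ i ∈ Finset.range (k + l + 1), ((ndigit p k i + ndigit p l i) % p) * p ^ i

/-- Digitwise subtraction modulo `p` of base-`p` digits: `k ⊖ l`. -/
def dsub (p k l : ℕ) : ℕ :=
  ∑ i ∈ Finset.range (k + l + 1), ((ndigit p k i + (p - ndigit p l i)) % p) * p ^ i

/-! The `n`-th net point has exactly `m` base-`p` digits, namely the entries of `C_j n⃗`, so
`wal_k(x_n) = ψ(n⃗ ⬝ C·k)` for the standard additive character `ψ` of `ℤ_p`. Each summand is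
therefore `ψ((n⃗ - v⃗) ⬝ C·k)`, and since `C·` maps `K` bijectively onto `ℤ_p^m` the sum is a full
character sum over `ℤ_p^m`: it is `p^m` if `n⃗ = v⃗` and `0` otherwise, and `n⃗` determines
`n < p^m`. -/

open Finset Matrix

section Digits

variable {p : ℕ}

lemma ndigit_sum_mul_pow {m : ℕ} {c : Fin m → ℕ} (hc : ∀ t, c t < p) (k : Fin m) :
    ndigit p (∑ t, c t * p ^ (t : ℕ)) k = c k := by
  induction m with
  | zero => exact k.elim0
  | succ m ih =>
    have hp : 0 < p := (Nat.zero_le _).trans_lt (hc 0)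
    have hsplit : ∑ t, c t * p ^ (t : ℕ) = c 0 + p * ∑ t : Fin m, c t.succ * p ^ (t : ℕ) := by
      rw [Fin.sum_univ_succ, mul_sum]
      simp [pow_succ', mul_left_comm]
    cases k using Fin.cases with
    | zero => simp [ndigit, hsplit, Nat.mod_eq_of_lt (hc 0)]
    | succ k =>
      rw [ndigit, Fin.val_succ, pow_succ', ← Nat.div_div_eq_div_mul, hsplit,
        Nat.add_mul_div_left _ _ hp, Nat.div_eq_of_lt (hc 0), zero_add]
      exact ih (fun t => hc t.succ) k

lemma ndigit_eq_zero_of_lt (hp : 1 < p) {k i : ℕ} (hki : k < i) : ndigit p k i = 0 := by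
  have hk : k < p ^ i := (Nat.lt_pow_self hp).trans_le (Nat.pow_le_pow_right (by omega) hki.le)
  simp [ndigit, Nat.div_eq_of_lt hk]

lemma eq_of_ndigit_eq {m n v : ℕ} (hn : n < p ^ m) (hv : v < p ^ m)
    (h : ∀ i < m, ndigit p n i = ndigit p v i) : n = v := by
  induction m generalizing n v with
  | zero => simp at hn hv; omega
  | succ m ih =>
    rw [pow_succ'] at hn hv
    have hdiv : n / p = v / p :=
      ih (Nat.div_lt_of_lt_mul hn) (Nat.div_lt_of_lt_mul hv) fun i hi => by
        simpa [ndigit, Nat.div_div_eq_div_mul, pow_succ'] using h (i + 1) (by omega)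
    have hmod : n % p = v % p := by simpa [ndigit] using h 0 (by omega)
    rw [← Nat.div_add_mod n p, ← Nat.div_add_mod v p, hdiv, hmod]

end Digits

section RealDigits

variable {p : ℕ}

lemma xdigit_natCast_div_pow_of_le (hp : 0 < p) (N : ℕ) {m u : ℕ} (hu : u ≤ m) :
    xdigit p ((N : ℝ) / p ^ m) u = ndigit p N (m - u) := by
  have hshift : (p : ℝ) ^ u * (N / p ^ m) = (N : ℝ) / (p ^ (m - u) : ℕ) := by
    rw [← pow_sub_mul_pow (p : ℝ) hu]
    push_cast
    field_simp
  rw [xdigit, hshift, Int.floor_toNat, Nat.floor_div_eq_div, ndigit]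

lemma xdigit_natCast_div_pow_of_lt (hp : 0 < p) (N : ℕ) {m u : ℕ} (hu : m < u) :
    xdigit p ((N : ℝ) / p ^ m) u = 0 := by
  obtain ⟨r, rfl⟩ := Nat.exists_eq_add_of_lt hu
  have hshift : (p : ℝ) ^ (m + r + 1) * (N / p ^ m) = (N * p ^ r * p : ℕ) := by
    push_cast
    field_simp
    ring
  rw [xdigit, hshift, Int.floor_natCast, Int.toNat_natCast, Nat.mul_mod_left]

lemma sum_div_pow_eq_natCast_div (hp : 0 < p) {m : ℕ} (d : Fin m → ℕ) :
    ∑ t, (d t : ℝ) / p ^ ((t : ℕ) + 1) =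
      ((∑ t : Fin m, d t.rev * p ^ (t : ℕ) : ℕ) : ℝ) / p ^ m := by
  rw [Nat.cast_sum, sum_div]
  refine Fintype.sum_equiv Fin.revPerm _ _ fun t => ?_
  rw [Fin.revPerm_apply, Fin.rev_rev, Fin.val_rev,
    ← pow_sub_mul_pow (p : ℝ) (t.isLt : (t : ℕ) + 1 ≤ m)]
  push_cast
  field_simp

lemma xdigit_sum_div_pow (hp : 0 < p) {m : ℕ} {d : Fin m → ℕ} (hd : ∀ t, d t < p) (i : Fin m) :
    xdigit p (∑ t, (d t : ℝ) / p ^ ((t : ℕ) + 1)) (i + 1) = d i := by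
  rw [sum_div_pow_eq_natCast_div hp, xdigit_natCast_div_pow_of_le hp _ i.isLt, ← Fin.val_rev,
    ndigit_sum_mul_pow (fun t => hd t.rev), Fin.rev_rev]

lemma xdigit_sum_div_pow_of_lt (hp : 0 < p) {m u : ℕ} (d : Fin m → ℕ) (hu : m < u) :
    xdigit p (∑ t, (d t : ℝ) / p ^ ((t : ℕ) + 1)) u = 0 := by
  rw [sum_div_pow_eq_natCast_div hp, xdigit_natCast_div_pow_of_lt hp _ hu]

end RealDigits

lemma AddChar.map_sum_eq_prod {A M ι : Type*} [AddCommMonoid A] [CommMonoid M] (ψ : AddChar A M)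
    (s : Finset ι) (f : ι → A) : ψ (∑ i ∈ s, f i) = ∏ i ∈ s, ψ (f i) := by
  induction s using Finset.cons_induction with
  | empty => simp
  | cons a s ha ih => rw [sum_cons, prod_cons, AddChar.map_add_eq_mul, ih]

lemma sum_stdAddChar_dotProduct {N : ℕ} [NeZero N] {ι : Type*} [Fintype ι] [DecidableEq ι]
    (w : ι → ZMod N) :
    ∑ h : ι → ZMod N, ZMod.stdAddChar (w ⬝ᵥ h) =
      if w = 0 then (N : ℂ) ^ Fintype.card ι else 0 := by
  let χ : AddChar (ι → ZMod N) ℂ :=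
    ZMod.stdAddChar.compAddMonoidHom (AddMonoidHom.mk' (w ⬝ᵥ ·) (dotProduct_add w))
  have hχ : χ = 0 ↔ w = 0 := by
    refine ⟨fun h => funext fun i => ?_, fun h => by ext; simp [χ, h]⟩
    have hi : ZMod.stdAddChar (w i) = ZMod.stdAddChar (0 : ZMod N) := by
      simpa [χ, dotProduct_single] using DFunLike.congr_fun h (Pi.single i 1)
    exact ZMod.injective_stdAddChar hi
  classical
  simpa [χ, hχ] using AddChar.sum_eq_ite χ

lemma sum_comp_eq_sum_of_existsUnique {α β M : Type*} [Fintype β] [AddCommMonoid M]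
    {K : Finset α} {g : α → β} (hK : ∀ b, ∃! a, a ∈ K ∧ g a = b) (f : β → M) :
    ∑ a ∈ K, f (g a) = ∑ b, f b :=
  sum_nbij g (fun _ _ => mem_univ _)
    (fun a ha _ ha' he => (hK (g a)).unique ⟨ha, rfl⟩ ⟨ha', he.symm⟩)
    (fun b _ => let ⟨a, ⟨ha, hab⟩, _⟩ := hK b; ⟨a, ha, hab⟩) fun _ _ => rfl

lemma omega_pow_eq_stdAddChar (p : ℕ) [NeZero p] (a : ℕ) :
    omega p ^ a = ZMod.stdAddChar (a : ZMod p) := by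
  rw [omega, ← Complex.exp_nat_mul, ZMod.stdAddChar_apply, ZMod.toCircle_natCast]
  ring_nf

lemma wal_eq_stdAddChar_dotProduct {p : ℕ} [NeZero p] (hp : 1 < p) {m : ℕ} (k : ℕ) {x : ℝ}
    (y : Fin m → ZMod p) (hx : ∀ i : Fin m, xdigit p x (i + 1) = (y i).val)
    (hx' : ∀ u, m < u → xdigit p x u = 0) :
    wal p k x = ZMod.stdAddChar (y ⬝ᵥ nvec p m k) := by
  set f : ℕ → ℕ := fun i => xdigit p x (i + 1) * ndigit p k i
  have hk : ∑ i ∈ range (k + 1), f i = ∑ i ∈ range (k + 1 + m), f i :=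
    sum_subset (range_subset_range.2 (by omega)) fun i _ hi => by
      simp [f, ndigit_eq_zero_of_lt hp (show k < i by simpa using hi)]
  have hm : ∑ i ∈ range m, f i = ∑ i ∈ range (k + 1 + m), f i :=
    sum_subset (range_subset_range.2 (by omega)) fun i _ hi => by
      simp [f, hx' (i + 1) (by simpa using hi)]
  rw [wal, hk, ← hm, omega_pow_eq_stdAddChar, ← Fin.sum_univ_eq_sum_range, Nat.cast_sum]
  simp [f, dotProduct, hx, nvec]

section DigitalNet

variable {p s m : ℕ} (C : Fin s → Matrix (Fin m) (Fin m) (ZMod p))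

lemma wal_netPoint [NeZero p] (hp : 1 < p) (k n : ℕ) (j : Fin s) :
    wal p k (netPoint p s m C n j) = ZMod.stdAddChar ((C j *ᵥ nvec p m n) ⬝ᵥ nvec p m k) :=
  wal_eq_stdAddChar_dotProduct hp k _
    (xdigit_sum_div_pow (by omega) fun _ => ZMod.val_lt _)
    fun _ hu => xdigit_sum_div_pow_of_lt (by omega) _ hu

lemma walS_netPoint [NeZero p] (hp : 1 < p) (k : Fin s → ℕ) (n : ℕ) :
    walS p s k (netPoint p s m C n) = ZMod.stdAddChar (nvec p m n ⬝ᵥ Cdot p s m C k) := by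
  have htranspose : ∀ j, (C j *ᵥ nvec p m n) ⬝ᵥ nvec p m (k j) =
      nvec p m n ⬝ᵥ ((C j)ᵀ *ᵥ nvec p m (k j)) := fun j => by
    rw [dotProduct_comm, dotProduct_mulVec, mulVec_transpose, dotProduct_comm]
  simp_rw [walS, wal_netPoint C hp, ← AddChar.map_sum_eq_prod, htranspose, ← dotProduct_sum]
  rfl

end DigitalNet

lemma nvec_inj {p m n v : ℕ} (hn : n < p ^ m) (hv : v < p ^ m) :
    nvec p m n = nvec p m v ↔ n = v := by
  refine ⟨fun h => eq_of_ndigit_eq hn hv fun i hi => ?_, fun h => h ▸ rfl⟩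
  have hi := (ZMod.natCast_eq_natCast_iff' _ _ p).1 (congrFun h ⟨i, hi⟩)
  simpa [ndigit, Nat.mod_mod] using hi

theorem statement10_general (p s m : ℕ) [Fact p.Prime]
    (C : Fin s → Matrix (Fin m) (Fin m) (ZMod p))
    (K : Finset (Fin s → ℕ))
    (hK : ∀ h : Fin m → ZMod p, ∃! k, k ∈ K ∧ Cdot p s m C k = h)
    (n v : ℕ) (hn : n < p ^ m) (hv : v < p ^ m) :
    ((p : ℂ) ^ m)⁻¹ * ∑ k ∈ K,
        walS p s k (netPoint p s m C n) * (starRingEnd ℂ) (walS p s k (netPoint p s m C v)) =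
      if n = v then 1 else 0 := by
  have hp := (Fact.out : p.Prime).one_lt
  have hterm : ∀ k, walS p s k (netPoint p s m C n) *
      (starRingEnd ℂ) (walS p s k (netPoint p s m C v)) =
        ZMod.stdAddChar ((nvec p m n - nvec p m v) ⬝ᵥ Cdot p s m C k) := fun k => by
    rw [walS_netPoint C hp, walS_netPoint C hp, ← AddChar.map_neg_eq_conj,
      ← AddChar.map_add_eq_mul, sub_dotProduct, sub_eq_add_neg]
  rw [sum_congr rfl fun k _ => hterm k,
    sum_comp_eq_sum_of_existsUnique hK fun h => ZMod.stdAddChar ((nvec p m n - nvec p m v) ⬝ᵥ h),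
    sum_stdAddChar_dotProduct, Fintype.card_fin]
  simp only [sub_eq_zero, nvec_inj hn hv]
  split_ifs <;> simp

/-- orthogonality of the Walsh functions indexed by a representative set `K`
on the points of the digital net. -/
theorem statement10 (p s m : ℕ) [Fact p.Prime] (hs : 1 ≤ s) (hm : 1 ≤ m)
    (C : Fin s → Matrix (Fin m) (Fin m) (ZMod p))
    (K : Finset (Fin s → ℕ))
    (hK : ∀ h : Fin m → ZMod p, ∃! k, k ∈ K ∧ Cdot p s m C k = h)
    (n v : ℕ) (hn : n < p ^ m) (hv : v < p ^ m) :
    ((p : ℂ) ^ m)⁻¹ * ∑ k ∈ K,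
        walS p s k (netPoint p s m C n) * (starRingEnd ℂ) (walS p s k (netPoint p s m C v)) =
      if n = v then 1 else 0 :=
  statement10_general p s m C K hK n v hn hv
end

section
/- (Closed form of the kernel R'.) Let α > 1 be real and R̂'(k) = ((p^α − p)/(p^α(p−1)))² · p^{−2α·⌊log_p k⌋} for k ≥ 1. Let z ∈ (0,1) with base-p digits z_j = ⌊p^j z⌋ mod p, and suppose i ≥ 1 is such that z_j = 0 for all 1 ≤ j < i and z_i ≠ 0. Then Σ_{k=1}^∞ R̂'(k) wal_k(z) = ((p^α − p)² / ((p−1)(p^{2α} − p))) · (1 − p^{i(1−2α)} (p^{2α} − 1)/(p − 1)). -/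
open scoped BigOperators

/-!
For `k < p ^ n`, `wal_k(z)` factors over the digits of `k`, so the block sum
`∑_{k < p^n} wal_k(z)` is a product of character sums `∑_{d < p} ω_p^{z_{j+1} d}`: it equals `p^n`
while `n < i` and vanishes from `n = i` on. The weight `R̂'(k)` only depends on the block
`p^n ≤ k < p^{n+1}` containing `k`, so for `N ≥ i` the partial sum over `k < p^N` is a fixed finite
combination of block sums, and a geometric sum evaluates it.
-/

open Finset Filter

theorem ndigit_zero (p n : ℕ) : ndigit p n 0 = n % p := by
  simp [ndigit]

theorem ndigit_succ (p n j : ℕ) : ndigit p n (j + 1) = ndigit p (n / p) j := by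
  simp only [ndigit, pow_succ', Nat.div_div_eq_div_mul]

theorem ndigit_eq_zero_of_lt_pow {p n j : ℕ} (h : n < p ^ j) : ndigit p n j = 0 := by
  simp [ndigit, Nat.div_eq_of_lt h]

theorem Finset.sum_range_mul_eq_sum_sum {M : Type*} [AddCommMonoid M] (f : ℕ → M) (m n : ℕ) :
    ∑ k ∈ range (m * n), f k = ∑ q ∈ range m, ∑ d ∈ range n, f (q * n + d) := by
  induction m with
  | zero => simp
  | succ m ih => rw [Nat.succ_mul, sum_range_add, ih, sum_range_succ]

theorem sum_range_pow_prod_ndigit {R : Type*} [CommSemiring R] {p : ℕ} (hp : 0 < p) (n : ℕ)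
    (f : ℕ → ℕ → R) :
    ∑ k ∈ range (p ^ n), ∏ j ∈ range n, f j (ndigit p k j)
      = ∏ j ∈ range n, ∑ d ∈ range p, f j d := by
  induction n generalizing f with
  | zero => simp
  | succ n ih =>
    have hdigits (q d : ℕ) (hd : d < p) :
        ∏ j ∈ range (n + 1), f j (ndigit p (q * p + d) j)
          = (∏ j ∈ range n, f (j + 1) (ndigit p q j)) * f 0 d := by
      have hmod : (q * p + d) % p = d := by
        rw [add_comm, Nat.add_mul_mod_self_right, Nat.mod_eq_of_lt hd]
      have hdiv : (q * p + d) / p = q := by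
        rw [add_comm, Nat.add_mul_div_right _ _ hp, Nat.div_eq_of_lt hd, zero_add]
      simp only [prod_range_succ', ndigit_succ, ndigit_zero, hmod, hdiv]
    rw [pow_succ, sum_range_mul_eq_sum_sum, prod_range_succ', ← ih, sum_mul_sum]
    exact sum_congr rfl fun q _ => sum_congr rfl fun d hd => hdigits q d (mem_range.1 hd)

theorem isPrimitiveRoot_omega {p : ℕ} (hp : p ≠ 0) : IsPrimitiveRoot (omega p) p :=
  Complex.isPrimitiveRoot_exp p hp

theorem norm_wal {p : ℕ} (hp : p ≠ 0) (k : ℕ) (x : ℝ) : ‖wal p k x‖ = 1 := by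
  rw [wal, norm_pow, (isPrimitiveRoot_omega hp).norm'_eq_one hp, one_pow]

theorem sum_range_omega_pow_pow {p c : ℕ} (hp : p ≠ 0) (hc : c < p) :
    ∑ d ∈ range p, (omega p ^ c) ^ d = if c = 0 then (p : ℂ) else 0 := by
  split_ifs with hc0
  · simp [hc0]
  · have hζ := isPrimitiveRoot_omega hp
    have hne : omega p ^ c ≠ 1 := fun h =>
      hc0 (Nat.eq_zero_of_dvd_of_lt ((hζ.pow_eq_one_iff_dvd c).1 h) hc)
    rw [geom_sum_eq hne, ← pow_mul, mul_comm, pow_mul, hζ.pow_eq_one, one_pow, sub_self, zero_div]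

theorem wal_eq_prod {p k n : ℕ} (hp : 1 < p) (hk : k < p ^ n) (x : ℝ) :
    wal p k x = ∏ j ∈ range n, (omega p ^ xdigit p x (j + 1)) ^ ndigit p k j := by
  have hvanish (m : ℕ) (hm : k < p ^ m) (M : ℕ) (hM : m ≤ M) :
      ∑ j ∈ range M, xdigit p x (j + 1) * ndigit p k j
        = ∑ j ∈ range m, xdigit p x (j + 1) * ndigit p k j := by
    refine (sum_subset (range_subset_range.2 hM) fun j _ hj => ?_).symm
    rw [ndigit_eq_zero_of_lt_pow
      (hm.trans_le (Nat.pow_le_pow_right (by omega) (by simpa using hj))), mul_zero]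
  have hk' : k < p ^ (k + 1) := (Nat.lt_succ_self k).trans (Nat.lt_pow_self hp)
  simp only [← pow_mul, prod_pow_eq_pow_sum, wal]
  rw [← hvanish _ hk' _ (le_max_right n (k + 1)), hvanish _ hk _ (le_max_left n (k + 1))]

theorem sum_range_pow_wal {p : ℕ} (hp : 1 < p) (x : ℝ) (n : ℕ) :
    ∑ k ∈ range (p ^ n), wal p k x
      = ∏ j ∈ range n, if xdigit p x (j + 1) = 0 then (p : ℂ) else 0 := by
  rw [sum_congr rfl fun k hk => wal_eq_prod hp (mem_range.1 hk) x,
    sum_range_pow_prod_ndigit (by omega)]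
  exact prod_congr rfl fun j _ => sum_range_omega_pow_pow (by omega) (Nat.mod_lt _ (by omega))

theorem sum_range_pow_wal_of_first_digit {p i : ℕ} (hp : 1 < p) {x : ℝ} (hi : 1 ≤ i)
    (hzero : ∀ j : ℕ, 1 ≤ j → j < i → xdigit p x j = 0) (hne : xdigit p x i ≠ 0) (n : ℕ) :
    ∑ k ∈ range (p ^ n), wal p k x = if n < i then (p : ℂ) ^ n else 0 := by
  rw [sum_range_pow_wal hp]
  split_ifs with hn
  · have hall (j : ℕ) (hj : j ∈ range n) : xdigit p x (j + 1) = 0 :=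
      hzero (j + 1) (by omega) (by rw [mem_range] at hj; omega)
    rw [prod_congr rfl fun j hj => if_pos (hall j hj), prod_const, card_range]
  · exact prod_eq_zero (mem_range.2 (by omega : i - 1 < n))
      (if_neg (by rwa [Nat.sub_add_cancel hi]))

theorem sum_Ico_one_pow_eq_sum_blocks {M : Type*} [CommRing M] {p : ℕ} (hp : 1 < p)
    (w a : ℕ → M) (N : ℕ) :
    ∑ k ∈ Ico 1 (p ^ N), w (Nat.log p k) * a k
      = ∑ n ∈ range N, w n * (∑ k ∈ range (p ^ (n + 1)), a k - ∑ k ∈ range (p ^ n), a k) := by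
  induction N with
  | zero => simp
  | succ N ih =>
    have hle : p ^ N ≤ p ^ (N + 1) := Nat.pow_le_pow_right (by omega) N.le_succ
    rw [← sum_Ico_consecutive _ (Nat.one_le_pow _ _ (by omega)) hle, ih, sum_range_succ,
      ← sum_Ico_eq_sub _ hle, mul_sum]
    congr 1
    refine sum_congr rfl fun k hk => ?_
    rw [mem_Ico] at hk
    rw [Nat.log_eq_of_pow_le_of_lt_pow hk.1 hk.2]

theorem tsum_eq_of_eventually_sum_range_eq {M : Type*} [AddCommMonoid M] [TopologicalSpace M]
    [T2Space M] {f : ℕ → M} (hf : Summable f) {g : ℕ → ℕ} (hg : Tendsto g atTop atTop) {C : M}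
    (hC : ∀ᶠ n in atTop, ∑ k ∈ range (g n), f k = C) : ∑' k, f k = C :=
  tendsto_nhds_unique (hf.hasSum.tendsto_sum_nat.comp hg)
    (tendsto_const_nhds.congr' (hC.mono fun _ h => h.symm))

theorem tsum_mul_wal_of_first_digit {p i : ℕ} (hp : 1 < p) {x : ℝ} (hi : 1 ≤ i)
    (hzero : ∀ j : ℕ, 1 ≤ j → j < i → xdigit p x j = 0) (hne : xdigit p x i ≠ 0) {w : ℕ → ℂ}
    (hw : Summable fun k => w (Nat.log p (k + 1)) * wal p (k + 1) x) :
    ∑' k, w (Nat.log p (k + 1)) * wal p (k + 1) x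
      = ∑ n ∈ range (i - 1), w n * ((p : ℂ) ^ (n + 1) - (p : ℂ) ^ n)
          - w (i - 1) * (p : ℂ) ^ (i - 1) := by
  obtain ⟨b, rfl⟩ : ∃ b, i = b + 1 := ⟨i - 1, by omega⟩
  have hS := sum_range_pow_wal_of_first_digit hp hi hzero hne
  refine tsum_eq_of_eventually_sum_range_eq hw ((tendsto_sub_atTop_nat 1).comp
    (tendsto_pow_atTop_atTop_of_one_lt hp)) ((eventually_ge_atTop (b + 1)).mono fun n hn => ?_)
  obtain ⟨m, rfl⟩ := Nat.exists_eq_add_of_le hn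
  have hshift : ∑ k ∈ range (p ^ (b + 1 + m) - 1), w (Nat.log p (k + 1)) * wal p (k + 1) x
      = ∑ k ∈ Ico 1 (p ^ (b + 1 + m)), w (Nat.log p k) * wal p k x := by
    rw [sum_Ico_eq_sum_range]
    exact sum_congr rfl fun k _ => by rw [add_comm 1 k]
  rw [Function.comp_apply, hshift, sum_Ico_one_pow_eq_sum_blocks hp, sum_range_add,
    sum_range_succ, Nat.add_sub_cancel]
  simp only [hS]
  have htail : ∑ n ∈ range m, w (b + 1 + n) *
      ((if b + 1 + n + 1 < b + 1 then (p : ℂ) ^ (b + 1 + n + 1) else 0)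
        - if b + 1 + n < b + 1 then (p : ℂ) ^ (b + 1 + n) else 0) = 0 :=
    sum_eq_zero fun n _ => by rw [if_neg (by omega), if_neg (by omega), sub_self, mul_zero]
  have hhead : ∑ n ∈ range b, w n *
      ((if n + 1 < b + 1 then (p : ℂ) ^ (n + 1) else 0) - if n < b + 1 then (p : ℂ) ^ n else 0)
        = ∑ n ∈ range b, w n * ((p : ℂ) ^ (n + 1) - (p : ℂ) ^ n) :=
    sum_congr rfl fun n hn => by rw [mem_range] at hn; rw [if_pos (by omega), if_pos (by omega)]
  rw [htail, hhead, if_neg (by omega), if_pos (by omega)]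
  ring

theorem rpow_neg_mul_log_le {p : ℕ} (hp : 1 < p) {s : ℝ} (hs : 0 ≤ s) {k : ℕ} (hk : k ≠ 0) :
    (p : ℝ) ^ (-(s * Nat.log p k)) ≤ (p : ℝ) ^ s * (k : ℝ) ^ (-s) := by
  have hp0 : (0 : ℝ) < p := by exact_mod_cast (zero_lt_one.trans hp)
  have hsplit :
      (p : ℝ) ^ (-(s * Nat.log p k)) = (p : ℝ) ^ s * ((p : ℝ) ^ (Nat.log p k + 1)) ^ (-s) := by
    rw [← Real.rpow_natCast, ← Real.rpow_mul hp0.le, ← Real.rpow_add hp0]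
    push_cast
    ring_nf
  have hlt : (k : ℝ) < (p : ℝ) ^ (Nat.log p k + 1) := by
    exact_mod_cast Nat.lt_pow_succ_log_self hp k
  rw [hsplit]
  exact mul_le_mul_of_nonneg_left
    (Real.rpow_le_rpow_of_nonpos (Nat.cast_pos.2 (Nat.pos_of_ne_zero hk)) hlt.le (neg_nonpos.2 hs))
    (by positivity)

theorem summable_rpow_neg_mul_log_mul_wal {p : ℕ} (hp : 1 < p) {s : ℝ} (hs : 1 < s) (c x : ℝ) :
    Summable fun k : ℕ =>
      Complex.ofReal (c * (p : ℝ) ^ (-(s * Nat.log p (k + 1)))) * wal p (k + 1) x := by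
  have hp0 : (0 : ℝ) < p := by exact_mod_cast (zero_lt_one.trans hp)
  have hpow : Summable fun k : ℕ => ((k + 1 : ℕ) : ℝ) ^ (-s) :=
    (summable_nat_add_iff 1).2 (Real.summable_nat_rpow.2 (by linarith))
  refine Summable.of_norm_bounded (hpow.mul_left (|c| * (p : ℝ) ^ s)) fun k => ?_
  rw [norm_mul, norm_wal (by omega), mul_one, Complex.norm_real, Real.norm_eq_abs, abs_mul,
    abs_of_pos (Real.rpow_pos_of_pos hp0 _), mul_assoc]
  gcongr
  exact rpow_neg_mul_log_le hp (by linarith) (Nat.succ_ne_zero k)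

theorem kernel_block_sum_eq {p α : ℝ} (hp0 : 0 < p) (hp1 : p ≠ 1) (hα : 2 * α ≠ 1) {i : ℕ}
    (hi : 1 ≤ i) :
    ∑ n ∈ range (i - 1),
          ((p ^ α - p) / (p ^ α * (p - 1))) ^ 2 * p ^ (-(2 * α * n)) * (p ^ (n + 1) - p ^ n)
        - ((p ^ α - p) / (p ^ α * (p - 1))) ^ 2 * p ^ (-(2 * α * (i - 1 : ℕ))) * p ^ (i - 1)
      = (p ^ α - p) ^ 2 / ((p - 1) * (p ^ (2 * α) - p)) *
          (1 - p ^ ((i : ℝ) * (1 - 2 * α)) * (p ^ (2 * α) - 1) / (p - 1)) := by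
  obtain ⟨b, rfl⟩ : ∃ b, i = b + 1 := ⟨i - 1, by omega⟩
  set x := p ^ α
  have hx : x ≠ 0 := (Real.rpow_pos_of_pos hp0 α).ne'
  have hsq : p ^ (2 * α) = x ^ 2 := by
    rw [← Real.rpow_natCast, ← Real.rpow_mul hp0.le, mul_comm]; norm_num
  have hxp : x ^ 2 ≠ p := by
    rw [← hsq]
    nth_rewrite 2 [← Real.rpow_one p]
    exact fun h => hα ((Real.rpow_right_inj hp0 hp1).1 h)
  have hweight (n : ℕ) : p ^ (-(2 * α * n)) = ((x ^ 2)⁻¹) ^ n := by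
    rw [← hsq, ← Real.rpow_neg hp0.le, ← Real.rpow_natCast, ← Real.rpow_mul hp0.le, neg_mul]
  have hlead : p ^ (((b + 1 : ℕ) : ℝ) * (1 - 2 * α)) = (p / x ^ 2) ^ (b + 1) := by
    rw [← hsq, mul_comm, Real.rpow_mul_natCast hp0.le, Real.rpow_sub hp0, Real.rpow_one]
  have hq : p / x ^ 2 ≠ 1 := by
    rw [Ne, div_eq_one_iff_eq (pow_ne_zero 2 hx)]
    exact hxp.symm
  have hterm (n : ℕ) : ((x ^ 2)⁻¹) ^ n * (p ^ (n + 1) - p ^ n) = (p - 1) * (p / x ^ 2) ^ n := by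
    rw [div_pow, inv_pow, pow_succ]; ring
  have hlast : ((x ^ 2)⁻¹) ^ b * p ^ b = (p / x ^ 2) ^ b := by rw [div_pow, inv_pow, inv_mul_eq_div]
  simp only [hweight, hsq, hlead, Nat.add_sub_cancel]
  simp only [mul_assoc, hterm, hlast]
  rw [← mul_sum, ← mul_sum, geom_sum_eq hq, pow_succ (p / x ^ 2) b]
  generalize (p / x ^ 2) ^ b = r
  have hp1' : p - 1 ≠ 0 := sub_ne_zero.2 hp1
  have hxp' : x ^ 2 - p ≠ 0 := sub_ne_zero.2 hxp
  field_simp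
  ring

theorem statement16_general (p : ℕ) (hp : p.Prime) (α : ℝ) (hα : 1 < α)
    (z : ℝ) (i : ℕ) (hi : 1 ≤ i)
    (hzj : ∀ j : ℕ, 1 ≤ j → j < i → xdigit p z j = 0) (hzi : xdigit p z i ≠ 0) :
    ∑' k : ℕ, (Complex.ofReal
          ((((p : ℝ) ^ α - p) / ((p : ℝ) ^ α * ((p : ℝ) - 1))) ^ 2 *
            (p : ℝ) ^ (-(2 * α * (Nat.log p (k + 1) : ℝ)))) * wal p (k + 1) z) =
      Complex.ofReal
        (((p : ℝ) ^ α - p) ^ 2 / (((p : ℝ) - 1) * ((p : ℝ) ^ (2 * α) - p)) *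
          (1 - (p : ℝ) ^ ((i : ℝ) * (1 - 2 * α)) * ((p : ℝ) ^ (2 * α) - 1) / ((p : ℝ) - 1))) := by
  have hp1 : (1 : ℝ) < p := by exact_mod_cast hp.one_lt
  have hsum := summable_rpow_neg_mul_log_mul_wal hp.one_lt (s := 2 * α) (by linarith)
    ((((p : ℝ) ^ α - p) / ((p : ℝ) ^ α * ((p : ℝ) - 1))) ^ 2) z
  rw [tsum_mul_wal_of_first_digit (w := fun n : ℕ => Complex.ofReal
      ((((p : ℝ) ^ α - p) / ((p : ℝ) ^ α * ((p : ℝ) - 1))) ^ 2 * (p : ℝ) ^ (-(2 * α * (n : ℝ)))))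
    hp.one_lt hi hzj hzi hsum,
    ← kernel_block_sum_eq (zero_lt_one.trans hp1) hp1.ne' (by linarith) hi]
  norm_cast

/-- closed form of the kernel `R'`:
`Σ_{k≥1} R̂'(k) wal_k(z) = ((p^α−p)²/((p−1)(p^{2α}−p)))(1 − p^{i(1−2α)}(p^{2α}−1)/(p−1))`
when the first nonzero base-`p` digit of `z` is the `i`-th one. -/
theorem statement16 (p : ℕ) (hp : p.Prime) (α : ℝ) (hα : 1 < α)
    (z : ℝ) (hz0 : 0 < z) (hz1 : z < 1) (i : ℕ) (hi : 1 ≤ i)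
    (hzj : ∀ j : ℕ, 1 ≤ j → j < i → xdigit p z j = 0) (hzi : xdigit p z i ≠ 0) :
    ∑' k : ℕ, (Complex.ofReal
          ((((p : ℝ) ^ α - p) / ((p : ℝ) ^ α * ((p : ℝ) - 1))) ^ 2 *
            (p : ℝ) ^ (-(2 * α * (Nat.log p (k + 1) : ℝ)))) * wal p (k + 1) z) =
      Complex.ofReal
        (((p : ℝ) ^ α - p) ^ 2 / (((p : ℝ) - 1) * ((p : ℝ) ^ (2 * α) - p)) *
          (1 - (p : ℝ) ^ ((i : ℝ) * (1 - 2 * α)) * ((p : ℝ) ^ (2 * α) - 1) / ((p : ℝ) - 1))) :=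
  statement16_general p hp α hα z i hi hzj hzi
end
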